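/- Let u, v be distinct vertices of a simple graph G with u isolated, and let H be the graph obtained from G by adding all edges between u and N_G(v), possibly adding the edge uv, and then adding at most k additional edges incident to u. Then cz(G,H) ≤ k + 2. -/

import Mathlib

variable {V : Type*}

open Classical in
/-- Local complementation at `v`: complement the induced subgraph on `N_G(v)`. -/
noncomputable def localComp (G : SimpleGraph V) (v : V) : SimpleGraph V where
  Adj x y := x ≠ y ∧ (if G.Adj v x ∧ G.Adj v y then ¬ G.Adj x y else G.Adj x y)
  symm := by
    constructor
    intro x y ⟨hxy, h⟩
    refine ⟨hxy.symm, ?_⟩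
    by_cases hc : G.Adj v x ∧ G.Adj v y
    · rw [if_pos hc] at h
      rw [if_pos ⟨hc.2, hc.1⟩]
      exact fun h' => h h'.symm
    · rw [if_neg hc] at h
      rw [if_neg (fun h' => hc ⟨h'.2, h'.1⟩)]
      exact h.symm
  loopless := ⟨fun x hx => hx.1 rfl⟩

/-- Toggle (add or remove) the edge `uv`. -/
def toggle (G : SimpleGraph V) (u v : V) : SimpleGraph V where
  Adj x y := x ≠ y ∧ Xor' (G.Adj x y) ((x = u ∧ y = v) ∨ (x = v ∧ y = u))
  symm := by
    constructor
    intro x y ⟨hxy, h⟩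
    refine ⟨hxy.symm, ?_⟩
    rw [G.adj_comm y x]
    unfold Xor' at *
    have e : ((y = u ∧ x = v) ∨ (y = v ∧ x = u)) ↔ ((x = u ∧ y = v) ∨ (x = v ∧ y = u)) := by tauto
    rwa [e]
  loopless := ⟨fun x hx => hx.1 rfl⟩

/-- Local equivalence: related by a sequence of local complementations. -/
def LocallyEquiv (G H : SimpleGraph V) : Prop :=
  Relation.ReflTransGen (fun A B => ∃ v, B = localComp A v) G H

/-- `CZle G H k` : there is a sequence `G = G₀, G₀', G₁, G₁', …, G_k, G_k' = H`
with each `Gᵢ'` locally equivalent to `Gᵢ` and each `Gᵢ` (i ≥ 1) obtained from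
`G_{i-1}'` by adding or removing a single edge. -/
inductive CZle : SimpleGraph V → SimpleGraph V → ℕ → Prop
  | base {G H : SimpleGraph V} : LocallyEquiv G H → CZle G H 0
  | step {G G' F H : SimpleGraph V} {k : ℕ} (u v : V) :
      LocallyEquiv G G' → u ≠ v → F = toggle G' u v → CZle F H k → CZle G H (k + 1)

/-- The CZ-distance between two graphs on the same vertex set. -/
noncomputable def czDist (G H : SimpleGraph V) : ℕ := sInf {k | CZle G H k}

/-- The CZ-distance of a graph: CZ-distance to the edgeless graph. -/
noncomputable def cz (G : SimpleGraph V) : ℕ := czDist G ⊥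

open Classical in
/-- Complementing on a vertex set `X`: replace the induced subgraph on `X` by its complement. -/
noncomputable def complOn (G : SimpleGraph V) (X : Set V) : SimpleGraph V :=
  SimpleGraph.fromRel (fun x y => if x ∈ X ∧ y ∈ X then ¬ G.Adj x y else G.Adj x y)

open Classical in
/-- The adjacency matrix over GF(2). -/
noncomputable def adjMat (G : SimpleGraph V) : Matrix V V (ZMod 2) :=
  fun x y => if G.Adj x y then 1 else 0

/-- `H` is a rank-`p` perturbation of `G`. -/
def IsRankPerturbation [Fintype V] (p : ℕ) (G H : SimpleGraph V) : Prop :=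
  ∃ M : Matrix V V (ZMod 2), M.IsSymm ∧ M.rank ≤ p ∧
    ∀ x y : V, x ≠ y → adjMat H x y = adjMat G x y + M x y

/-- `G` is a circle graph: the overlap graph of a family of closed intervals in `ℝ`
with pairwise distinct endpoints. -/
def IsCircleGraph (G : SimpleGraph V) : Prop :=
  ∃ l r : V → ℝ, (∀ v, l v < r v) ∧
    Function.Injective (fun p : V × Bool => if p.2 then r p.1 else l p.1) ∧
    ∀ x y, G.Adj x y ↔
      ((l x < l y ∧ l y < r x ∧ r x < r y) ∨ (l y < l x ∧ l x < r y ∧ r y < r x))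

/-- Two vertex sets are homogeneous: complete or anticomplete to each other. -/
def Homog (G : SimpleGraph V) (X Y : Finset V) : Prop :=
  (∀ x ∈ X, ∀ y ∈ Y, G.Adj x y) ∨ (∀ x ∈ X, ∀ y ∈ Y, ¬ G.Adj x y)

/-- Every part of the partition `P` has red degree (number of other parts it is
inhomogeneous to) at most `k`. -/
def RedDegLE [Fintype V] [DecidableEq V] (G : SimpleGraph V) (P : Finpartition (Finset.univ : Finset V))
    (k : ℕ) : Prop :=
  ∀ X ∈ P.parts, {Y : Finset V | Y ∈ P.parts ∧ Y ≠ X ∧ ¬ Homog G X Y}.ncard ≤ k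

/-- One contraction: merge two parts of the partition. -/
def MergeStep [Fintype V] [DecidableEq V]
    (P Q : Finpartition (Finset.univ : Finset V)) : Prop :=
  ∃ A B, A ∈ P.parts ∧ B ∈ P.parts ∧ A ≠ B ∧
    Q.parts = insert (A ∪ B) ((P.parts.erase A).erase B)

/-- `G` has twin-width at most `k`: there is a contraction (partition) sequence from
the discrete partition to the trivial one in which every partition has red degree at
most `k`. -/
def TwinWidthLE [Fintype V] [DecidableEq V] (G : SimpleGraph V) (k : ℕ) : Prop :=
  ∃ (m : ℕ) (seq : Fin (m + 1) → Finpartition (Finset.univ : Finset V)),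
    (∀ X ∈ (seq 0).parts, X.card = 1) ∧
    (seq (Fin.last m)).parts.card ≤ 1 ∧
    (∀ i : Fin m, MergeStep (seq i.castSucc) (seq i.succ)) ∧
    (∀ i, RedDegLE G (seq i) k)

/-- `H` is obtained from `G` (in which `u` is isolated) by adding all edges between `u`
and `N_G(v)`, possibly adding the edge `uv`, and then adding at most `k` additional
edges incident to `u`. -/
def ExtendStep (k : ℕ) (G H : SimpleGraph V) (u v : V) : Prop :=
  u ≠ v ∧ G.neighborSet u = ∅ ∧
  (∀ x y, x ≠ u → y ≠ u → (H.Adj x y ↔ G.Adj x y)) ∧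
  G.neighborSet v ⊆ H.neighborSet u ∧
  ∃ T : Finset V, T.card ≤ k ∧ H.neighborSet u ⊆ G.neighborSet v ∪ {v} ∪ ↑T


/-! Let `B` be `G * v` with the edge `uv` added; `u` is still isolated in `G * v`, so in `B` the
neighbourhood of `v` is `N_G(v) ∪ {u}`. Hence `B * v` undoes the first local complementation away
from `u` and joins `u` to `N_G(v) ∪ {v}`. This costs one edge toggle, and `H` differs from `B * v`
only in edges `uy` with `y ∈ T ∪ {v}`, which are toggled one at a time. -/

namespace SimpleGraph
variable {G H : SimpleGraph V} {u v a b x y : V}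

theorem localComp_adj :
    (localComp G v).Adj x y ↔ x ≠ y ∧ (G.Adj x y ↔ ¬(G.Adj v x ∧ G.Adj v y)) := by
  classical
  simp only [localComp]
  split_ifs <;> tauto

theorem toggle_adj :
    (toggle G a b).Adj x y ↔ x ≠ y ∧ (G.Adj x y ↔ s(x, y) ≠ s(a, b)) := by
  simp only [toggle, Sym2.eq_iff, ne_eq]
  exact and_congr_right fun _ => xor_iff_iff_not

theorem edgeSet_toggle (hab : a ≠ b) :
    (toggle G a b).edgeSet = symmDiff G.edgeSet {s(a, b)} := by
  ext e
  induction e with | h x y => ?_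
  simp only [mem_edgeSet, toggle_adj, Set.mem_symmDiff, Set.mem_singleton_iff]
  by_cases hxy : x = y
  · subst hxy
    simp only [Sym2.eq_iff, SimpleGraph.irrefl, false_and, false_or, ne_eq, not_true_eq_false]
    grind
  · tauto

theorem localComp_toggle_localComp_adj_of_ne (hx : x ≠ u) (hy : y ≠ u) :
    (localComp (toggle (localComp G v) u v) v).Adj x y ↔ G.Adj x y := by
  simp only [localComp_adj, toggle_adj, Sym2.eq_iff, ne_eq]
  grind [G.adj_comm, G.ne_of_adj]

theorem localComp_toggle_localComp_adj_left (hu : ∀ z, ¬G.Adj u z) (huv : u ≠ v) :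
    (localComp (toggle (localComp G v) u v) v).Adj u y ↔ y = v ∨ G.Adj v y := by
  simp only [localComp_adj, toggle_adj, Sym2.eq_iff, ne_eq]
  grind [G.adj_comm, G.ne_of_adj]

theorem symmDiff_edgeSet_subset_image [DecidableEq V] {S : Finset V}
    (hoff : ∀ x y, x ≠ u → y ≠ u → (G.Adj x y ↔ H.Adj x y))
    (hS : ∀ y, ¬(G.Adj u y ↔ H.Adj u y) → y ∈ S) :
    symmDiff G.edgeSet H.edgeSet ⊆ S.image (s(u, ·)) := by
  intro e he
  induction e with | h x y => ?_
  have hxy : ¬(G.Adj x y ↔ H.Adj x y) := by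
    simp only [Set.mem_symmDiff, mem_edgeSet] at he
    tauto
  rw [Finset.coe_image]
  by_cases hx : x = u
  · subst hx
    exact ⟨y, hS y hxy, rfl⟩
  by_cases hy : y = u
  · subst hy
    rw [G.adj_comm, H.adj_comm] at hxy
    exact ⟨x, hS x hxy, Sym2.eq_swap⟩
  exact absurd (hoff x y hx hy) hxy

end SimpleGraph

theorem LocallyEquiv.localComp (G : SimpleGraph V) (v : V) : LocallyEquiv G (localComp G v) :=
  .single ⟨v, rfl⟩

namespace CZle
variable {G G' H : SimpleGraph V} {m : ℕ}

theorem of_locallyEquiv (h : LocallyEquiv G G') (hc : CZle G' H m) : CZle G H m := by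
  cases hc with
  | base h' => exact base (h.trans h')
  | step a b h' hab hF hrest => exact step a b (h.trans h') hab hF hrest

theorem exists_le_card_of_symmDiff_subset (S : Finset (Sym2 V))
    (hS : symmDiff G.edgeSet H.edgeSet ⊆ S) : ∃ m ≤ S.card, CZle G H m := by
  classical
  induction S using Finset.induction_on generalizing G with
  | empty =>
    refine ⟨0, le_rfl, ?_⟩
    rw [Finset.coe_empty, Set.subset_empty_iff, ← Set.bot_eq_empty, symmDiff_eq_bot,
      SimpleGraph.edgeSet_inj] at hS
    exact hS ▸ base .refl
  | insert e S he ih =>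
    by_cases heGH : e ∈ symmDiff G.edgeSet H.edgeSet
    · induction e with | h a b => ?_
      have hab : a ≠ b := fun h => by
        subst h
        rcases heGH with ⟨h, -⟩ | ⟨h, -⟩ <;> exact (SimpleGraph.not_isDiag_of_mem_edgeSet _ h) rfl
      have hF : symmDiff (toggle G a b).edgeSet H.edgeSet ⊆ S := by
        rw [SimpleGraph.edgeSet_toggle hab, symmDiff_right_comm]
        rintro f (⟨hf, hfe⟩ | ⟨rfl, hf⟩)
        · exact (Finset.mem_insert.mp (hS hf)).resolve_left hfe
        · exact absurd heGH hf
      obtain ⟨m, hm, hc⟩ := ih hF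
      exact ⟨m + 1, by rw [Finset.card_insert_of_notMem he]; omega, step a b .refl hab rfl hc⟩
    · obtain ⟨m, hm, hc⟩ := ih fun f hf => by
        obtain rfl | hfS := Finset.mem_insert.mp (hS hf)
        exacts [absurd hf heGH, hfS]
      exact ⟨m, hm.trans (Finset.card_le_card (Finset.subset_insert e S)), hc⟩

end CZle

open SimpleGraph in
theorem stmt11_general (G H : SimpleGraph V) (u v : V) (k : ℕ)
    (h : ExtendStep k G H u v) : czDist G H ≤ k + 2 := by
  classical
  obtain ⟨huv, hiso, hoff, hsub, T, hT, hTsub⟩ := h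
  have hu : ∀ z, ¬G.Adj u z := Set.eq_empty_iff_forall_notMem.mp hiso
  set C := localComp (toggle (localComp G v) u v) v
  have hdiff : symmDiff C.edgeSet H.edgeSet ⊆ (insert v T).image (s(u, ·)) := by
    refine symmDiff_edgeSet_subset_image (fun x y hx hy => ?_) fun y hy => ?_
    · rw [localComp_toggle_localComp_adj_of_ne hx hy, hoff x y hx hy]
    · have hsub_y : G.Adj v y → H.Adj u y := @hsub y
      have hTsub_y : H.Adj u y → y ∈ G.neighborSet v ∪ {v} ∪ ↑T := @hTsub y
      rw [localComp_toggle_localComp_adj_left hu huv] at hy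
      simp only [Set.mem_union, mem_neighborSet, Set.mem_singleton_iff, Finset.mem_coe] at hTsub_y
      rw [Finset.mem_insert]
      tauto
  obtain ⟨m, hm, hCH⟩ := CZle.exists_le_card_of_symmDiff_subset _ hdiff
  have hGH : CZle G H (m + 1) :=
    .step u v (.localComp G v) huv rfl (hCH.of_locallyEquiv (.localComp _ v))
  calc czDist G H ≤ m + 1 := Nat.sInf_le hGH
    _ ≤ (insert v T).card + 1 := by grw [hm, Finset.card_image_le]
    _ ≤ k + 2 := by grw [Finset.card_insert_le, hT]

theorem stmt11 [Fintype V] (G H : SimpleGraph V) (u v : V) (k : ℕ)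
    (h : ExtendStep k G H u v) : czDist G H ≤ k + 2 :=
  stmt11_general G H u v k h
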